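/- Fix σ ∈ [0,1], ε > 0 and reals 0 < L < U. Let K ≥ 1 and let L = c_1 < c_2 < ... < c_{K+1} = U be the greedy breakpoints: for each k ∈ {1,...,K}, c_{k+1} is the largest u ∈ (c_k, U] such that Φ^f(c_k, u) ≤ ε and Φ^g(c_k, u) ≤ ε. Let K' ≥ 1 and let L = d_1 ≤ d_2 ≤ ... ≤ d_{K'+1} = U be any points satisfying Φ^f(d_k, d_{k+1}) ≤ ε and Φ^g(d_k, d_{k+1}) ≤ ε for every k ∈ {1,...,K'} with d_k < d_{k+1}. Then K ≤ K'; that is, the greedy partition uses the minimum possible number of sub-intervals achieving relative error at most ε for both f and g. -/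

import Mathlib

/-- f(t) = t^(σ-1) (real power). -/
noncomputable def fCNL (σ t : ℝ) : ℝ := t ^ (σ - 1)

/-- g(t) = t^σ (real power). -/
noncomputable def gCNL (σ t : ℝ) : ℝ := t ^ σ

/-- Chord (linear interpolation) approximation of f on [c,u], evaluated at t. -/
noncomputable def fhat (σ c u t : ℝ) : ℝ :=
  fCNL σ c + ((fCNL σ u - fCNL σ c) / (u - c)) * (t - c)

/-- Chord (linear interpolation) approximation of g on [c,u], evaluated at t. -/
noncomputable def ghat (σ c u t : ℝ) : ℝ :=
  gCNL σ c + ((gCNL σ u - gCNL σ c) / (u - c)) * (t - c)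

/-- Pointwise relative error of the chord approximation of f. -/
noncomputable def phiF (σ c u t : ℝ) : ℝ := (fhat σ c u t - fCNL σ t) / fCNL σ t

/-- Pointwise relative error of the chord approximation of g. -/
noncomputable def phiG (σ c u t : ℝ) : ℝ := (gCNL σ t - ghat σ c u t) / gCNL σ t

/-- Maximum relative error of the chord approximation of f on [c,u]. -/
noncomputable def PhiF (σ c u : ℝ) : ℝ := sSup (phiF σ c u '' Set.Icc c u)

/-- Maximum relative error of the chord approximation of g on [c,u]. -/
noncomputable def PhiG (σ c u : ℝ) : ℝ := sSup (phiG σ c u '' Set.Icc c u)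


/-! The greedy breakpoints "stay ahead" of any feasible partition: by induction `d k ≤ c k`.
The inductive step rests on one monotonicity fact: moving the left endpoint of `[a, u]` to the
right can only decrease both maximal relative errors. For the convex `f = t^(σ-1)` the chord from
the later left endpoint lies below the earlier one on `[b, u]` (the secant slopes through `u`
increase), while for the concave `g = t^σ` it lies above. Hence if `[d k, d (k+1)]` is feasible
and `d k ≤ c k < d (k+1)`, so is `[c k, d (k+1)]`, and maximality of `c (k+1)` gives
`d (k+1) ≤ c (k+1)`. Were `K' < K`, then at `k = K' + 1` we would get
`U = d (K'+1) ≤ c (K'+1) < c (K+1) = U`. -/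

open Set

lemma convexOn_rpow_of_nonpos {p : ℝ} (hp : p ≤ 0) :
    ConvexOn ℝ (Ioi 0) fun x : ℝ ↦ x ^ p := by
  refine convexOn_of_hasDerivWithinAt2_nonneg (f' := fun x ↦ p * x ^ (p - 1))
    (f'' := fun x ↦ p * ((p - 1) * x ^ (p - 1 - 1))) (convex_Ioi 0) ?_ ?_ ?_ ?_
  · exact fun x hx ↦ (Real.continuousAt_rpow_const x p (Or.inl (ne_of_gt hx))).continuousWithinAt
  all_goals intro x hx; rw [interior_Ioi] at hx
  · exact (Real.hasDerivAt_rpow_const (Or.inl hx.ne')).hasDerivWithinAt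
  · exact ((Real.hasDerivAt_rpow_const (Or.inl hx.ne')).const_mul p).hasDerivWithinAt
  · rw [← mul_assoc]
    exact mul_nonneg (mul_nonneg_of_nonpos_of_nonpos hp (by linarith))
      (Real.rpow_pos_of_pos hx _).le

lemma chord_eq_right (f : ℝ → ℝ) {c u : ℝ} (hcu : c ≠ u) (t : ℝ) :
    f c + (f u - f c) / (u - c) * (t - c) = f u + (f c - f u) / (c - u) * (t - u) := by
  have : u - c ≠ 0 := sub_ne_zero.2 hcu.symm
  have : c - u ≠ 0 := sub_ne_zero.2 hcu
  field_simp
  ring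

section Chord

variable {s : Set ℝ} {f : ℝ → ℝ} {a b u t : ℝ}

lemma ConvexOn.chord_le_chord_of_le_left (hf : ConvexOn ℝ s f) (ha : a ∈ s) (hb : b ∈ s)
    (hu : u ∈ s) (hab : a ≤ b) (hbu : b < u) (htu : t ≤ u) :
    f b + (f u - f b) / (u - b) * (t - b) ≤ f a + (f u - f a) / (u - a) * (t - a) := by
  have hau : a < u := hab.trans_lt hbu
  rw [chord_eq_right f hbu.ne, chord_eq_right f hau.ne]
  have hslope := hf.secant_mono hu ha hb hau.ne hbu.ne hab
  have := mul_le_mul_of_nonpos_right hslope (sub_nonpos.2 htu)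
  linarith

lemma ConcaveOn.chord_le_chord_of_le_left (hf : ConcaveOn ℝ s f) (ha : a ∈ s) (hb : b ∈ s)
    (hu : u ∈ s) (hab : a ≤ b) (hbu : b < u) (htu : t ≤ u) :
    f a + (f u - f a) / (u - a) * (t - a) ≤ f b + (f u - f b) / (u - b) * (t - b) := by
  have := hf.neg.chord_le_chord_of_le_left ha hb hu hab hbu htu
  simp only [Pi.neg_apply, neg_sub_neg, ← neg_sub (f u), neg_div, neg_mul] at this
  linarith

end Chord

section RelativeError

variable {σ a b u t : ℝ}

lemma phiF_anti_left (hσ : σ ≤ 1) (ha : 0 < a) (hab : a ≤ b) (hbu : b < u) (ht : 0 < t)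
    (htu : t ≤ u) : phiF σ b u t ≤ phiF σ a u t := by
  have hf : ConvexOn ℝ (Ioi 0) (fCNL σ) := convexOn_rpow_of_nonpos (by linarith)
  have hb : 0 < b := ha.trans_le hab
  have hchord : fhat σ b u t ≤ fhat σ a u t :=
    hf.chord_le_chord_of_le_left ha hb (hb.trans hbu) hab hbu htu
  exact div_le_div_of_nonneg_right (by linarith) (Real.rpow_pos_of_pos ht _).le

lemma phiG_anti_left (hσ₀ : 0 ≤ σ) (hσ₁ : σ ≤ 1) (ha : 0 < a) (hab : a ≤ b) (hbu : b < u)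
    (ht : 0 < t) (htu : t ≤ u) : phiG σ b u t ≤ phiG σ a u t := by
  have hg : ConcaveOn ℝ (Ioi 0) (gCNL σ) :=
    (Real.concaveOn_rpow hσ₀ hσ₁).subset Ioi_subset_Ici_self (convex_Ioi 0)
  have hb : 0 < b := ha.trans_le hab
  have hchord : ghat σ a u t ≤ ghat σ b u t :=
    hg.chord_le_chord_of_le_left ha hb (hb.trans hbu) hab hbu htu
  exact div_le_div_of_nonneg_right (by linarith) (Real.rpow_pos_of_pos ht _).le

lemma continuousOn_rpow_const_Icc (p : ℝ) (ha : 0 < a) :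
    ContinuousOn (fun t : ℝ ↦ t ^ p) (Icc a u) :=
  continuousOn_id.rpow_const fun _ ht ↦ Or.inl (ha.trans_le ht.1).ne'

lemma continuousOn_phiF (ha : 0 < a) : ContinuousOn (phiF σ a u) (Icc a u) := by
  unfold phiF fhat fCNL
  exact ((by fun_prop : ContinuousOn (fun t : ℝ ↦ _ + _ * (t - a)) _).sub
    (continuousOn_rpow_const_Icc _ ha)).div (continuousOn_rpow_const_Icc _ ha)
    fun t ht ↦ (Real.rpow_pos_of_pos (ha.trans_le ht.1) _).ne'

lemma continuousOn_phiG (ha : 0 < a) : ContinuousOn (phiG σ a u) (Icc a u) := by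
  unfold phiG ghat gCNL
  exact ((continuousOn_rpow_const_Icc _ ha).sub (by fun_prop)).div
    (continuousOn_rpow_const_Icc _ ha) fun t ht ↦ (Real.rpow_pos_of_pos (ha.trans_le ht.1) _).ne'

/-- Continuity of `ψ` on the compact `Icc a u` makes its image bounded above; without that
bound `sSup` would take its junk value `0`. -/
lemma sSup_image_Icc_le_of_le {φ ψ : ℝ → ℝ} (hψ : ContinuousOn ψ (Icc a u)) (hab : a ≤ b)
    (hbu : b ≤ u) (hle : ∀ t ∈ Icc b u, φ t ≤ ψ t) :
    sSup (φ '' Icc b u) ≤ sSup (ψ '' Icc a u) := by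
  refine csSup_le ((nonempty_Icc.2 hbu).image φ) ?_
  rintro _ ⟨t, ht, rfl⟩
  exact (hle t ht).trans <| le_csSup (isCompact_Icc.bddAbove_image hψ)
    ⟨t, ⟨hab.trans ht.1, ht.2⟩, rfl⟩

lemma PhiF_anti_left (hσ : σ ≤ 1) (ha : 0 < a) (hab : a ≤ b) (hbu : b < u) :
    PhiF σ b u ≤ PhiF σ a u :=
  sSup_image_Icc_le_of_le (continuousOn_phiF ha) hab hbu.le fun _ ht ↦
    phiF_anti_left hσ ha hab hbu (ha.trans_le (hab.trans ht.1)) ht.2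

lemma PhiG_anti_left (hσ₀ : 0 ≤ σ) (hσ₁ : σ ≤ 1) (ha : 0 < a) (hab : a ≤ b) (hbu : b < u) :
    PhiG σ b u ≤ PhiG σ a u :=
  sSup_image_Icc_le_of_le (continuousOn_phiG ha) hab hbu.le fun _ ht ↦
    phiG_anti_left hσ₀ hσ₁ ha hab hbu (ha.trans_le (hab.trans ht.1)) ht.2

end RelativeError

section Greedy

variable {P : ℝ → ℝ → Prop} {L U : ℝ} {K K' : ℕ} {c d : ℕ → ℝ}

lemma greedy_stays_ahead (hP : ∀ a b u, L ≤ a → a ≤ b → b < u → P a u → P b u)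
    (hc : StrictMonoOn c (Icc 1 (K + 1))) (hc1 : c 1 = L)
    (hgreedy : ∀ k, 1 ≤ k → k ≤ K → ∀ u ∈ Ioc (c k) U, P (c k) u → u ≤ c (k + 1))
    (hd : MonotoneOn d (Icc 1 (K' + 1))) (hd1 : d 1 = L) (hdK' : d (K' + 1) = U)
    (hdfeas : ∀ k, 1 ≤ k → k ≤ K' → d k < d (k + 1) → P (d k) (d (k + 1))) :
    ∀ n, n ≤ K → n ≤ K' → d (n + 1) ≤ c (n + 1) := by
  intro n
  induction n with
  | zero => simp [hc1, hd1]
  | succ n ih =>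
    intro hnK hnK'
    have hdc : d (n + 1) ≤ c (n + 1) := ih (by omega) (by omega)
    rcases le_or_gt (d (n + 2)) (c (n + 1)) with hle | hlt
    · exact hle.trans <| hc.monotoneOn ⟨by omega, by omega⟩ ⟨by omega, by omega⟩ (by omega)
    · have hLd : L ≤ d (n + 1) := hd1 ▸ hd ⟨le_rfl, by omega⟩ ⟨by omega, by omega⟩ (by omega)
      have hdU : d (n + 2) ≤ U := hdK' ▸ hd ⟨by omega, by omega⟩ ⟨by omega, le_rfl⟩ (by omega)
      have hfeas := hdfeas (n + 1) (by omega) hnK' (hdc.trans_lt hlt)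
      exact hgreedy (n + 1) (by omega) hnK _ ⟨hlt, hdU⟩ (hP _ _ _ hLd hdc hlt hfeas)

lemma greedy_count_le (hP : ∀ a b u, L ≤ a → a ≤ b → b < u → P a u → P b u)
    (hc : StrictMonoOn c (Icc 1 (K + 1))) (hc1 : c 1 = L) (hcK : c (K + 1) = U)
    (hgreedy : ∀ k, 1 ≤ k → k ≤ K → ∀ u ∈ Ioc (c k) U, P (c k) u → u ≤ c (k + 1))
    (hd : MonotoneOn d (Icc 1 (K' + 1))) (hd1 : d 1 = L) (hdK' : d (K' + 1) = U)
    (hdfeas : ∀ k, 1 ≤ k → k ≤ K' → d k < d (k + 1) → P (d k) (d (k + 1))) :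
    K ≤ K' := by
  by_contra! hK
  have hahead := greedy_stays_ahead hP hc hc1 hgreedy hd hd1 hdK' hdfeas K' hK.le le_rfl
  have hlt : c (K' + 1) < c (K + 1) := hc ⟨by omega, by omega⟩ ⟨by omega, le_rfl⟩ (by omega)
  linarith

end Greedy

theorem stmt_7_general (σ ε L U : ℝ) (hσ0 : 0 ≤ σ) (hσ1 : σ ≤ 1)
    (hL : 0 < L)
    (K : ℕ) (c : ℕ → ℝ)
    (hc1 : c 1 = L) (hcK : c (K + 1) = U)
    (hgreedy : ∀ k, 1 ≤ k → k ≤ K →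
      c (k + 1) ∈ Set.Ioc (c k) U ∧
      PhiF σ (c k) (c (k + 1)) ≤ ε ∧ PhiG σ (c k) (c (k + 1)) ≤ ε ∧
      ∀ u ∈ Set.Ioc (c k) U, PhiF σ (c k) u ≤ ε → PhiG σ (c k) u ≤ ε → u ≤ c (k + 1))
    (K' : ℕ) (d : ℕ → ℝ)
    (hd1 : d 1 = L) (hdK' : d (K' + 1) = U)
    (hdmono : ∀ k, 1 ≤ k → k ≤ K' → d k ≤ d (k + 1))
    (hdfeas : ∀ k, 1 ≤ k → k ≤ K' → d k < d (k + 1) →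
      PhiF σ (d k) (d (k + 1)) ≤ ε ∧ PhiG σ (d k) (d (k + 1)) ≤ ε) :
    K ≤ K' := by
  have hshrink : ∀ a b u, L ≤ a → a ≤ b → b < u →
      PhiF σ a u ≤ ε ∧ PhiG σ a u ≤ ε → PhiF σ b u ≤ ε ∧ PhiG σ b u ≤ ε :=
    fun a b u hLa hab hbu h ↦ have ha := hL.trans_le hLa
      ⟨(PhiF_anti_left hσ1 ha hab hbu).trans h.1, (PhiG_anti_left hσ0 hσ1 ha hab hbu).trans h.2⟩
  have hc : StrictMonoOn c (Icc 1 (K + 1)) :=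
    strictMonoOn_of_lt_add_one ordConnected_Icc fun k _ hk hk₁ ↦ (hgreedy k hk.1 (Nat.le_of_add_le_add_right hk₁.2)).1.1
  have hd : MonotoneOn d (Icc 1 (K' + 1)) :=
    monotoneOn_of_le_add_one ordConnected_Icc fun k _ hk hk₁ ↦ hdmono k hk.1 (Nat.le_of_add_le_add_right hk₁.2)
  exact greedy_count_le hshrink hc hc1 hcK
    (fun k hk hkK u hu h ↦ (hgreedy k hk hkK).2.2.2 u hu h.1 h.2) hd hd1 hdK' hdfeas

/-- Theorem 3: the greedy discretization uses the minimum number of sub-intervals. -/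
theorem stmt_7 (σ ε L U : ℝ) (hσ0 : 0 ≤ σ) (hσ1 : σ ≤ 1) (hε : 0 < ε)
    (hL : 0 < L) (hLU : L < U)
    (K : ℕ) (hK : 1 ≤ K) (c : ℕ → ℝ)
    (hc1 : c 1 = L) (hcK : c (K + 1) = U)
    (hgreedy : ∀ k, 1 ≤ k → k ≤ K →
      c (k + 1) ∈ Set.Ioc (c k) U ∧
      PhiF σ (c k) (c (k + 1)) ≤ ε ∧ PhiG σ (c k) (c (k + 1)) ≤ ε ∧
      ∀ u ∈ Set.Ioc (c k) U, PhiF σ (c k) u ≤ ε → PhiG σ (c k) u ≤ ε → u ≤ c (k + 1))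
    (K' : ℕ) (hK' : 1 ≤ K') (d : ℕ → ℝ)
    (hd1 : d 1 = L) (hdK' : d (K' + 1) = U)
    (hdmono : ∀ k, 1 ≤ k → k ≤ K' → d k ≤ d (k + 1))
    (hdfeas : ∀ k, 1 ≤ k → k ≤ K' → d k < d (k + 1) →
      PhiF σ (d k) (d (k + 1)) ≤ ε ∧ PhiG σ (d k) (d (k + 1)) ≤ ε) :
    K ≤ K' :=
  stmt_7_general σ ε L U hσ0 hσ1 hL K c hc1 hcK hgreedy K' d hd1 hdK' hdmono hdfeas
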